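/- arXiv:2604.00047 — 2 statements merged into one kernel-verified Lean document; each statement's English description precedes it below -/
import Mathlib

section
/- Let m ≥ 1 and let χ be a non-trivial Dirichlet character mod m. Then the prime harmonic character sum converges: there exists L ∈ ℂ such that Σ_{p ≤ x, p prime} χ(p)/p tends to L as x → ∞. -/
open Filter Finset ArithmeticFunction

private lemma abel_Ico_bound {c : ℕ → ℂ} {C : ℝ} (hC : ∀ N, ‖∑ n ∈ range N, c n‖ ≤ C)
    {g : ℕ → ℝ} {N M : ℕ} (hNM : N ≤ M)
    (hmono : ∀ i j, N ≤ i → i ≤ j → g j ≤ g i) (h0 : ∀ i, N ≤ i → 0 ≤ g i) :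
    ‖∑ n ∈ Ico N M, g n • c n‖ ≤ 2 * C * g N := by
  have hC0 : 0 ≤ C := le_trans (norm_nonneg _) (hC 0)
  rcases eq_or_lt_of_le hNM with rfl | hlt
  · simp only [Ico_self, sum_empty, norm_zero]
    have := h0 N le_rfl
    positivity
  · rw [Finset.sum_Ico_by_parts g c hlt]
    have hM1 : N ≤ M - 1 := Nat.le_sub_one_of_lt hlt
    calc ‖g (M-1) • ∑ i ∈ range M, c i - g N • ∑ i ∈ range N, c i -
          ∑ i ∈ Ico N (M-1), (g (i+1) - g i) • ∑ j ∈ range (i+1), c j‖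
        ≤ ‖g (M-1) • ∑ i ∈ range M, c i‖ + ‖g N • ∑ i ∈ range N, c i‖ +
          ‖∑ i ∈ Ico N (M-1), (g (i+1) - g i) • ∑ j ∈ range (i+1), c j‖ := by
          apply le_trans (norm_sub_le _ _); gcongr; exact norm_sub_le _ _
      _ ≤ g (M-1) * C + g N * C + ∑ i ∈ Ico N (M-1), (g i - g (i+1)) * C := by
          gcongr with i hi
          · rw [norm_smul, Real.norm_eq_abs, abs_of_nonneg (h0 _ hM1)]
            exact mul_le_mul_of_nonneg_left (hC _) (h0 _ hM1)
          · rw [norm_smul, Real.norm_eq_abs, abs_of_nonneg (h0 _ le_rfl)]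
            exact mul_le_mul_of_nonneg_left (hC _) (h0 _ le_rfl)
          · refine le_trans (norm_sum_le _ _) (Finset.sum_le_sum fun i hi => ?_)
            rw [norm_smul, Real.norm_eq_abs]
            have hi' := (Finset.mem_Ico.mp hi).1
            rw [abs_of_nonpos (by linarith [hmono i (i+1) hi' (Nat.le_succ i)])]
            rw [neg_sub]
            gcongr
            · linarith [hmono i (i+1) hi' (Nat.le_succ i), h0 i hi']
            · exact hC _
      _ = g (M-1) * C + g N * C + (g N - g (M-1)) * C := by
          congr 1
          rw [← Finset.sum_mul]
          congr 1
          rw [Finset.sum_Ico_eq_sum_range]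
          have := Finset.sum_range_sub' (fun i => g (N + i)) (M - 1 - N)
          simpa [Nat.add_sub_cancel' hM1, add_assoc] using this
      _ = 2 * C * g N := by ring

private lemma abel_tendsto {c : ℕ → ℂ} {C : ℝ} (hC : ∀ N, ‖∑ n ∈ range N, c n‖ ≤ C)
    {g : ℕ → ℝ} {N₀ : ℕ}
    (hmono : ∀ i j, N₀ ≤ i → i ≤ j → g j ≤ g i) (h0 : ∀ i, N₀ ≤ i → 0 ≤ g i)
    (hg : Tendsto g atTop (nhds 0)) :
    ∃ L : ℂ, Tendsto (fun M => ∑ n ∈ range M, g n • c n) atTop (nhds L) ∧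
      ∀ M, N₀ ≤ M → ‖L - ∑ n ∈ range M, g n • c n‖ ≤ 2 * C * g M := by
  set P : ℕ → ℂ := fun M => ∑ n ∈ range M, g n • c n with hP
  have key : ∀ N M, N₀ ≤ N → N ≤ M → ‖P M - P N‖ ≤ 2 * C * g N := by
    intro N M hN hNM
    have : P M - P N = ∑ n ∈ Ico N M, g n • c n := by
      rw [hP]
      simp only
      rw [Finset.sum_Ico_eq_sub _ hNM]
    rw [this]
    exact abel_Ico_bound hC hNM (fun i j hi => hmono i j (le_trans hN hi))
      (fun i hi => h0 i (le_trans hN hi))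
  have hg2 : Tendsto (fun n => 2 * C * g n) atTop (nhds 0) := by
    simpa using hg.const_mul (2 * C)
  have hcauchy : CauchySeq P := by
    rw [Metric.cauchySeq_iff']
    intro ε hε
    obtain ⟨N, hN⟩ := (Metric.tendsto_atTop.mp hg2 ε hε) 
    refine ⟨max N N₀, fun n hn => ?_⟩
    rw [dist_eq_norm]
    calc ‖P n - P (max N N₀)‖ ≤ 2 * C * g (max N N₀) :=
          key _ _ (le_max_right _ _) hn
      _ < ε := by
          have := hN (max N N₀) (le_max_left _ _)
          rw [Real.dist_eq, sub_zero] at this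
          exact lt_of_le_of_lt (le_abs_self _) this
  obtain ⟨L, hL⟩ := cauchySeq_tendsto_of_complete hcauchy
  refine ⟨L, hL, fun M hM => ?_⟩
  have : Tendsto (fun M' => ‖P M' - P M‖) atTop (nhds ‖L - P M‖) :=
    ((hL.sub_const (P M)).norm)
  refine le_of_tendsto this ?_
  filter_upwards [eventually_ge_atTop M] with M' hM'
  exact key M M' hM hM'

private lemma char_period_sum {m : ℕ} [NeZero m] (χ : DirichletCharacter ℂ m) (hχ : χ ≠ 1)
    (K : ℕ) : ∑ n ∈ Ico K (K + m), χ (n : ZMod m) = 0 := by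
  have h := MulChar.sum_eq_zero_of_ne_one (χ := χ) hχ
  rw [← h]
  refine Finset.sum_nbij' (fun n => (n : ZMod m)) (fun a => K + ((a - (K : ZMod m)).val))
    (fun _ _ => Finset.mem_univ _) ?_ ?_ ?_ (fun _ _ => rfl)
  · intro a _
    show K + ((a - (K : ZMod m)).val) ∈ Ico K (K + m)
    rw [Finset.mem_Ico]
    exact ⟨Nat.le_add_right _ _, by
      have := ZMod.val_lt (a - (K : ZMod m))
      omega⟩
  · intro n hn
    rw [Finset.mem_Ico] at hn
    show K + (((n : ZMod m) - (K : ZMod m)).val) = n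
    have h1 : ((n : ZMod m) - (K : ZMod m)) = ((n - K : ℕ) : ZMod m) := by
      rw [Nat.cast_sub hn.1]
    rw [h1, ZMod.val_cast_of_lt (by omega)]
    omega
  · intro a _
    show (((K + ((a - (K : ZMod m)).val) : ℕ)) : ZMod m) = a
    push_cast
    rw [ZMod.natCast_val, ZMod.cast_id]
    ring

private lemma char_sum_bound {m : ℕ} [NeZero m] (χ : DirichletCharacter ℂ m) (hχ : χ ≠ 1) :
    ∀ N, ‖∑ n ∈ range N, χ (n : ZMod m)‖ ≤ m := by
  intro N
  induction N using Nat.strong_induction_on with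
  | _ N ih =>
    rcases lt_or_ge N m with h | h
    · calc ‖∑ n ∈ range N, χ (n : ZMod m)‖ ≤ ∑ n ∈ range N, ‖χ (n : ZMod m)‖ :=
            norm_sum_le _ _
        _ ≤ ∑ _n ∈ range N, 1 := Finset.sum_le_sum fun n _ => χ.norm_le_one _
        _ = N := by simp
        _ ≤ m := by exact_mod_cast h.le
    · have hm : 0 < m := Nat.pos_of_ne_zero (NeZero.ne m)
      have hsplit : range N = range (N - m) ∪ Ico (N - m) N := by
        rw [Finset.range_eq_Ico, Finset.range_eq_Ico, Finset.Ico_union_Ico_eq_Ico (Nat.zero_le _) (Nat.sub_le _ _)]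
      have hdisj : Disjoint (range (N - m)) (Ico (N - m) N) := by
        rw [Finset.range_eq_Ico]
        exact Finset.Ico_disjoint_Ico_consecutive _ _ _
      rw [hsplit, Finset.sum_union hdisj]
      have : ∑ n ∈ Ico (N - m) N, χ (n : ZMod m) = 0 := by
        have := char_period_sum χ hχ (N - m)
        rwa [Nat.sub_add_cancel h] at this
      rw [this, add_zero]
      exact ih (N - m) (by omega)

private lemma hyperbola (f : ℕ × ℕ → ℂ) (x : ℕ) :
    ∑ n ∈ range (x+1), ∑ p ∈ n.divisorsAntidiagonal, f p
      = ∑ d ∈ range (x+1), ∑ e ∈ Icc 1 (x / d), f (d, e) := by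
  rw [Finset.sum_sigma', Finset.sum_sigma']
  refine Finset.sum_nbij' (fun p => ⟨p.2.1, p.2.2⟩) (fun q => ⟨q.1 * q.2, q.1, q.2⟩)
    ?_ ?_ ?_ ?_ ?_
  · rintro ⟨n, d, e⟩ hm
    simp only [Finset.mem_sigma, Finset.mem_range, Nat.mem_divisorsAntidiagonal,
      Finset.mem_Icc] at hm ⊢
    obtain ⟨hn, hde, hn0⟩ := hm
    have h2 : d ≠ 0 ∧ e ≠ 0 := by
      constructor <;> rintro rfl <;> simp_all
    have hd : 0 < d := Nat.pos_of_ne_zero h2.1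
    have he : 0 < e := Nat.pos_of_ne_zero h2.2
    refine ⟨by calc d ≤ d * e := Nat.le_mul_of_pos_right d he
                  _ = n := hde
                  _ < x + 1 := hn, he, ?_⟩
    rw [Nat.le_div_iff_mul_le hd, mul_comm]
    omega
  · rintro ⟨d, e⟩ hm
    simp only [Finset.mem_sigma, Finset.mem_range, Nat.mem_divisorsAntidiagonal,
      Finset.mem_Icc] at hm ⊢
    obtain ⟨hd, he1, he2⟩ := hm
    have hd0 : 0 < d := by
      rcases Nat.eq_zero_or_pos d with h | h
      · subst h; simp at he2; omega
      · exact h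
    rw [Nat.le_div_iff_mul_le hd0] at he2
    exact ⟨by rw [mul_comm] at he2; omega, trivial, by positivity⟩
  · rintro ⟨n, d, e⟩ hm
    simp only [Finset.mem_sigma, Finset.mem_range, Nat.mem_divisorsAntidiagonal] at hm
    obtain ⟨_, hde, _⟩ := hm
    simp [hde]
  · rintro ⟨d, e⟩ _
    rfl
  · rintro ⟨n, d, e⟩ _
    rfl

private lemma summable_nonprime :
    Summable (fun n : ℕ => (if n.Prime then 0 else vonMangoldt n) / n) := by
  have h := vonMangoldt.summable_residueClass_non_primes_div (q := 1) 0
  refine h.congr fun n => ?_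
  congr 1
  by_cases hn : n.Prime
  · simp [hn]
  · simp only [hn, if_false]
    exact Set.indicator_of_mem (by exact Subsingleton.elim _ _) _

private lemma chebyshev_bound :
    ∃ K : ℝ, 0 ≤ K ∧ ∀ x : ℕ, 1 ≤ x →
      ∑ n ∈ range (x+1), vonMangoldt n ≤ K * x := by
  set T : ℝ := ∑' n : ℕ, (if n.Prime then 0 else vonMangoldt n) / n with hT
  have hnonneg : ∀ n : ℕ, 0 ≤ (if n.Prime then 0 else vonMangoldt n) / n := by
    intro n
    have := vonMangoldt_nonneg (n := n)
    positivity
  have hT0 : 0 ≤ T := tsum_nonneg hnonneg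
  refine ⟨Real.log 4 + 2 * T, by positivity, fun x hx => ?_⟩
  rw [← Finset.sum_filter_add_sum_filter_not (range (x+1)) Nat.Prime]
  have hprime : ∑ n ∈ (range (x+1)).filter Nat.Prime, vonMangoldt n ≤ Real.log 4 * x := by
    have h1 : ∑ n ∈ (range (x+1)).filter Nat.Prime, vonMangoldt n
        = Real.log (primorial x) := by
      rw [primorial, Nat.cast_prod, Real.log_prod]
      · refine Finset.sum_congr rfl fun p hp => ?_
        rw [vonMangoldt_apply_prime (Finset.mem_filter.mp hp).2]
      · intro p hp
        have := (Finset.mem_filter.mp hp).2.pos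
        positivity
    rw [h1]
    calc Real.log (primorial x) ≤ Real.log ((4:ℝ)^x) := by
          apply Real.log_le_log (by exact_mod_cast primorial_pos x)
          exact_mod_cast primorial_le_4_pow x
      _ = x * Real.log 4 := by rw [Real.log_pow]
      _ = Real.log 4 * x := mul_comm _ _
  have hnp : ∑ n ∈ (range (x+1)).filter (fun n => ¬ n.Prime), vonMangoldt n
      ≤ 2 * T * x := by
    have step1 : ∑ n ∈ (range (x+1)).filter (fun n => ¬ n.Prime), vonMangoldt n
        ≤ ∑ n ∈ (range (x+1)).filter (fun n => ¬ n.Prime),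
            ((x:ℝ)+1) * (vonMangoldt n / n) := by
      refine Finset.sum_le_sum fun n hn => ?_
      rcases Nat.eq_zero_or_pos n with rfl | hn0
      · simp
      · have hnx : (n:ℝ) ≤ (x:ℝ) + 1 := by
          have := Finset.mem_range.mp (Finset.mem_filter.mp hn).1
          exact_mod_cast Nat.le_of_lt_succ this |>.trans (Nat.le_succ x)
        have h0 : (0:ℝ) < n := by exact_mod_cast hn0
        calc vonMangoldt n = (n:ℝ) * (vonMangoldt n / n) := by field_simp
          _ ≤ ((x:ℝ)+1) * (vonMangoldt n / n) := by
              have := vonMangoldt_nonneg (n := n)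
              gcongr
    have step2 : ∑ n ∈ (range (x+1)).filter (fun n => ¬ n.Prime), vonMangoldt n / n ≤ T := by
      have : ∑ n ∈ (range (x+1)).filter (fun n => ¬ n.Prime), vonMangoldt n / n
          = ∑ n ∈ range (x+1), (if n.Prime then 0 else vonMangoldt n) / n := by
        rw [Finset.sum_filter]
        refine Finset.sum_congr rfl fun n _ => ?_
        by_cases hn : n.Prime <;> simp [hn]
      rw [this]
      exact Summable.sum_le_tsum _ (fun n _ => hnonneg n) summable_nonprime
    calc ∑ n ∈ (range (x+1)).filter (fun n => ¬ n.Prime), vonMangoldt n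
        ≤ ((x:ℝ)+1) * ∑ n ∈ (range (x+1)).filter (fun n => ¬ n.Prime),
            (vonMangoldt n / n) := by rw [← Finset.mul_sum] at step1; exact step1
      _ ≤ ((x:ℝ)+1) * T := by
          have hx1 : (0:ℝ) ≤ (x:ℝ)+1 := by positivity
          exact mul_le_mul_of_nonneg_left step2 hx1
      _ ≤ 2 * (x:ℝ) * T := by
          have hx1 : (1:ℝ) ≤ (x:ℝ) := by exact_mod_cast hx
          nlinarith
      _ = 2 * T * x := by ring
  calc _ ≤ Real.log 4 * x + 2 * T * x := add_le_add hprime hnp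
    _ = (Real.log 4 + 2 * T) * x := by ring

private lemma Lc_ne_zero {m : ℕ} [NeZero m] (χ : DirichletCharacter ℂ m) (hχ : χ ≠ 1)
    {C : ℝ} (hC : ∀ N, ‖∑ n ∈ range N, χ (n : ZMod m)‖ ≤ C)
    {Lc : ℂ}
    (hLc : Tendsto (fun M => ∑ n ∈ range M, ((n:ℝ))⁻¹ • χ (n : ZMod m)) atTop (nhds Lc))
    (hLcB : ∀ M, 1 ≤ M → ‖Lc - ∑ n ∈ range M, ((n:ℝ))⁻¹ • χ (n : ZMod m)‖ ≤ 2 * C * ((M:ℝ))⁻¹) :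
    Lc ≠ 0 := by
  have hC0 : 0 ≤ C := le_trans (norm_nonneg _) (hC 0)
  set s : ℕ → ℝ := fun k => 1 + (1:ℝ)/(k+1) with hs
  have hs1 : ∀ k, 1 < s k := fun k => by
    have : (0:ℝ) < 1/(k+1) := by positivity
    simp only [hs]; linarith
  have hs_re : ∀ k, 1 < ((s k : ℝ) : ℂ).re := fun k => by
    rw [Complex.ofReal_re]; exact hs1 k
  have hstend : Tendsto s atTop (nhds 1) := by
    have := tendsto_one_div_add_atTop_nhds_zero_nat (𝕜 := ℝ)
    have h2 := this.const_add (1:ℝ)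
    simpa [hs] using h2
  -- L-function continuity
  have h1 : Tendsto (fun k => DirichletCharacter.LFunction χ ((s k : ℝ) : ℂ)) atTop
      (nhds (DirichletCharacter.LFunction χ 1)) := by
    have hc : Tendsto (fun k => ((s k : ℝ) : ℂ)) atTop (nhds (1:ℂ)) := by
      have := (Complex.continuous_ofReal.tendsto (1:ℝ)).comp hstend
      simpa [Function.comp_def] using this
    exact ((DirichletCharacter.differentiable_LFunction hχ).continuous.tendsto 1).comp hc
  -- identification of LSeries with limit of smul partial sums and tail bound
  have key : ∀ k M, 1 ≤ M →
      ‖LSeries (fun n : ℕ => χ (n : ZMod m)) ((s k : ℝ) : ℂ)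
        - ∑ n ∈ range M, ((n:ℝ) ^ (-(s k))) • χ (n : ZMod m)‖ ≤ 2 * C * ((M:ℝ))⁻¹ := by
    intro k M hM
    have hmono : ∀ i j : ℕ, 1 ≤ i → i ≤ j → ((j:ℝ) ^ (-(s k))) ≤ ((i:ℝ) ^ (-(s k))) := by
      intro i j hi hij
      apply Real.rpow_le_rpow_of_nonpos (by positivity)
        (by exact_mod_cast hij) (by linarith [hs1 k])
    have h0 : ∀ i : ℕ, 1 ≤ i → 0 ≤ ((i:ℝ) ^ (-(s k))) := fun i hi => by positivity
    have htend0 : Tendsto (fun n : ℕ => (n:ℝ) ^ (-(s k))) atTop (nhds 0) := by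
      have : Tendsto (fun y : ℝ => y ^ (-(s k))) atTop (nhds 0) :=
        tendsto_rpow_neg_atTop (by linarith [hs1 k] : (0:ℝ) < s k)
      exact this.comp tendsto_natCast_atTop_atTop
    obtain ⟨L', hL', hB'⟩ := abel_tendsto hC hmono h0 htend0
    -- identify L' with the LSeries
    have hsummable := DirichletCharacter.LSeriesSummable_of_one_lt_re χ (hs_re k)
    have hterm : ∀ n : ℕ, LSeries.term (fun n : ℕ => χ (n : ZMod m)) ((s k : ℝ) : ℂ) n
        = ((n:ℝ) ^ (-(s k))) • χ (n : ZMod m) := by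
      intro n
      rcases Nat.eq_zero_or_pos n with rfl | hn
      · rw [LSeries.term_zero]
        simp only [Nat.cast_zero]
        rw [Real.zero_rpow (by intro h; nlinarith [hs1 k] : -(s k) ≠ 0)]
        simp
      · rw [LSeries.term_of_ne_zero (Nat.pos_iff_ne_zero.mp hn)]
        rw [Real.rpow_neg (Nat.cast_nonneg n)]
        rw [Complex.real_smul]
        push_cast
        rw [Complex.ofReal_cpow (Nat.cast_nonneg n)]
        push_cast
        rw [div_eq_mul_inv, mul_comm]
    have htends : Tendsto (fun M => ∑ n ∈ range M, ((n:ℝ) ^ (-(s k))) • χ (n : ZMod m)) atTop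
        (nhds (LSeries (fun n : ℕ => χ (n : ZMod m)) ((s k : ℝ) : ℂ))) := by
      have := hsummable.hasSum.tendsto_sum_nat
      refine this.congr fun M => Finset.sum_congr rfl fun n _ => hterm n
    have : L' = LSeries (fun n : ℕ => χ (n : ZMod m)) ((s k : ℝ) : ℂ) :=
      tendsto_nhds_unique hL' htends
    rw [← this]
    calc ‖L' - ∑ n ∈ range M, ((n:ℝ) ^ (-(s k))) • χ (n : ZMod m)‖
        ≤ 2 * C * ((M:ℝ) ^ (-(s k))) := hB' M hM
      _ ≤ 2 * C * ((M:ℝ))⁻¹ := by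
          have h1M : (1:ℝ) ≤ (M:ℝ) := by exact_mod_cast hM
          have := Real.rpow_le_rpow_of_exponent_le h1M
            (by linarith [hs1 k] : -(s k) ≤ (-1 : ℝ))
          rw [Real.rpow_neg_one] at this
          have h2C : (0:ℝ) ≤ 2 * C := by linarith
          exact mul_le_mul_of_nonneg_left this h2C
  -- the LSeries values tend to Lc
  have h3 : Tendsto (fun k => LSeries (fun n : ℕ => χ (n : ZMod m)) ((s k : ℝ) : ℂ)) atTop
      (nhds Lc) := by
    rw [Metric.tendsto_atTop]
    intro ε hε
    -- choose M
    obtain ⟨M, hM1, hMbound⟩ : ∃ M : ℕ, 1 ≤ M ∧ 2 * C * ((M:ℝ))⁻¹ < ε/4 := by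
      have : Tendsto (fun M : ℕ => 2 * C * ((M:ℝ))⁻¹) atTop (nhds 0) := by
        simpa using (tendsto_inv_atTop_nhds_zero_nat (𝕜 := ℝ)).const_mul (2*C)
      have := (this.eventually (eventually_lt_nhds (by positivity : (0:ℝ) < ε/4))).and
        (eventually_ge_atTop 1)
      obtain ⟨M, hM⟩ := this.exists
      exact ⟨M, hM.2, hM.1⟩
    -- finite sum convergence
    have hfin : Tendsto (fun k => ∑ n ∈ range M, ((n:ℝ) ^ (-(s k))) • χ (n : ZMod m)) atTop
        (nhds (∑ n ∈ range M, ((n:ℝ))⁻¹ • χ (n : ZMod m))) := by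
      refine tendsto_finset_sum _ fun n _ => ?_
      rcases Nat.eq_zero_or_pos n with rfl | hn
      · refine Tendsto.congr (fun k => ?_)
          (tendsto_const_nhds (x := (((0:ℕ):ℝ))⁻¹ • χ ((0:ℕ) : ZMod m)))
        simp [Real.zero_rpow (show -(s k) ≠ 0 by intro h; nlinarith [hs1 k])]
      · have hne : (n:ℝ) ≠ 0 := by positivity
        have hexp : Tendsto (fun k => -(s k)) atTop (nhds (-1)) := hstend.neg
        have hbase : Tendsto (fun k => (n:ℝ) ^ (-(s k))) atTop (nhds ((n:ℝ) ^ (-1:ℝ))) :=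
          ((Real.continuousAt_const_rpow hne).tendsto).comp hexp
        rw [Real.rpow_neg_one] at hbase
        exact hbase.smul_const _
    rw [Metric.tendsto_atTop] at hfin
    obtain ⟨K, hK⟩ := hfin (ε/4) (by positivity)
    refine ⟨K, fun k hk => ?_⟩
    have e1 := key k M hM1
    have e2 := hK k hk
    have e3 := hLcB M hM1
    rw [dist_eq_norm] at e2 ⊢
    calc ‖LSeries (fun n : ℕ => χ (n : ZMod m)) ((s k : ℝ) : ℂ) - Lc‖
        ≤ ‖LSeries (fun n : ℕ => χ (n : ZMod m)) ((s k : ℝ) : ℂ)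
            - ∑ n ∈ range M, ((n:ℝ) ^ (-(s k))) • χ (n : ZMod m)‖
          + ‖∑ n ∈ range M, ((n:ℝ) ^ (-(s k))) • χ (n : ZMod m)
            - ∑ n ∈ range M, ((n:ℝ))⁻¹ • χ (n : ZMod m)‖
          + ‖(∑ n ∈ range M, ((n:ℝ))⁻¹ • χ (n : ZMod m)) - Lc‖ := by
            have h5 := norm_sub_le_norm_sub_add_norm_sub
              (LSeries (fun n : ℕ => χ (n : ZMod m)) ((s k : ℝ) : ℂ))
              (∑ n ∈ range M, ((n:ℝ) ^ (-(s k))) • χ (n : ZMod m)) Lc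
            have h6 := norm_sub_le_norm_sub_add_norm_sub
              (∑ n ∈ range M, ((n:ℝ) ^ (-(s k))) • χ (n : ZMod m))
              (∑ n ∈ range M, ((n:ℝ))⁻¹ • χ (n : ZMod m)) Lc
            linarith
      _ < ε/4 + ε/4 + ε/4 := by
          refine add_lt_add_of_lt_of_le (add_lt_add_of_le_of_lt (le_trans e1 hMbound.le) e2) ?_
          rw [norm_sub_rev]
          exact le_trans e3 hMbound.le
      _ < ε := by linarith
  -- conclude
  have h4 : ∀ k, LSeries (fun n : ℕ => χ (n : ZMod m)) ((s k : ℝ) : ℂ)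
      = DirichletCharacter.LFunction χ ((s k : ℝ) : ℂ) := fun k =>
    (DirichletCharacter.LFunction_eq_LSeries χ (hs_re k)).symm
  have : Lc = DirichletCharacter.LFunction χ 1 :=
    tendsto_nhds_unique h3 (Tendsto.congr (fun k => (h4 k).symm) h1)
  rw [this]
  exact DirichletCharacter.LFunction_apply_one_ne_zero hχ

set_option maxHeartbeats 2000000 in
open Filter Finset in
/-- For a non-trivial Dirichlet character `χ` mod `m`, the prime harmonic character sum
`Σ_{p ≤ x, p prime} χ(p)/p` converges as `x → ∞`. -/
theorem prime_harmonic_character_sum_converges (m : ℕ) [NeZero m]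
    (χ : DirichletCharacter ℂ m) (hχ : χ ≠ 1) :
    ∃ L : ℂ, Tendsto
      (fun x : ℕ => ∑ p ∈ (range (x + 1)).filter Nat.Prime, χ (p : ZMod m) / (p : ℂ))
      atTop (nhds L) := by
  classical
  set C : ℝ := (m : ℝ) with hCdef
  have hC : ∀ N, ‖∑ n ∈ range N, χ (n : ZMod m)‖ ≤ C := char_sum_bound χ hχ
  have hC0 : 0 ≤ C := le_trans (norm_nonneg _) (hC 0)
  -- the sum `Σ χ(n)/n` converges to some `Lc ≠ 0`
  have hmono_inv : ∀ i j : ℕ, 1 ≤ i → i ≤ j → ((j:ℝ))⁻¹ ≤ ((i:ℝ))⁻¹ := by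
    intro i j hi hij
    have h1 : (0:ℝ) < i := by exact_mod_cast hi
    have h2 : (i:ℝ) ≤ j := by exact_mod_cast hij
    gcongr
  obtain ⟨Lc, hLc, hLcB⟩ := abel_tendsto (N₀ := 1) hC hmono_inv
    (fun i _ => by positivity) tendsto_inv_atTop_nhds_zero_nat
  have hLcne : Lc ≠ 0 := Lc_ne_zero χ hχ hC hLc hLcB
  -- bound on partial sums of `Σ χ(n) log n / n`
  set K₁ : ℝ := (∑ n ∈ range 3, ‖(Real.log n / n) • χ (n : ZMod m)‖) + 2*C*(Real.log 3/3)
    with hK₁def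
  have hlog3 : (0:ℝ) ≤ Real.log 3 / 3 := by positivity
  have hmono_log_div : ∀ i j : ℕ, 3 ≤ i → i ≤ j →
      Real.log j / j ≤ Real.log i / i := by
    intro i j hi hij
    have he3 : Real.exp 1 ≤ 3 := by
      have := Real.exp_one_lt_d9
      linarith
    have hi' : Real.exp 1 ≤ (i:ℝ) := le_trans he3 (by exact_mod_cast hi)
    have hj' : Real.exp 1 ≤ (j:ℝ) := le_trans hi' (by exact_mod_cast hij)
    exact Real.log_div_self_antitoneOn hi' hj' (by exact_mod_cast hij)
  have hnonneg_log_div : ∀ i : ℕ, 3 ≤ i → 0 ≤ Real.log i / i := by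
    intro i hi
    have : (1:ℝ) ≤ i := by exact_mod_cast le_trans (by norm_num) hi
    have := Real.log_nonneg this
    positivity
  have hG : ∀ M, ‖∑ n ∈ range M, (Real.log n / n) • χ (n : ZMod m)‖ ≤ K₁ := by
    intro M
    rcases le_or_gt M 3 with h | h
    · calc ‖∑ n ∈ range M, (Real.log n / n) • χ (n : ZMod m)‖
          ≤ ∑ n ∈ range M, ‖(Real.log n / n) • χ (n : ZMod m)‖ := norm_sum_le _ _
        _ ≤ ∑ n ∈ range 3, ‖(Real.log n / n) • χ (n : ZMod m)‖ :=
            Finset.sum_le_sum_of_subset_of_nonneg (Finset.range_subset_range.mpr h)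
              (fun _ _ _ => norm_nonneg _)
        _ ≤ K₁ := by rw [hK₁def]; nlinarith
    · have hsplit : range M = range 3 ∪ Ico 3 M := by
        rw [Finset.range_eq_Ico, Finset.range_eq_Ico, Finset.Ico_union_Ico_eq_Ico (Nat.zero_le _) h.le]
      have hdisj : Disjoint (range 3) (Ico 3 M) := by
        rw [Finset.range_eq_Ico]; exact Finset.Ico_disjoint_Ico_consecutive _ _ _
      rw [hsplit, Finset.sum_union hdisj]
      calc _ ≤ ‖∑ n ∈ range 3, (Real.log n / n) • χ (n : ZMod m)‖
              + ‖∑ n ∈ Ico 3 M, (Real.log n / n) • χ (n : ZMod m)‖ := norm_add_le _ _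
        _ ≤ (∑ n ∈ range 3, ‖(Real.log n / n) • χ (n : ZMod m)‖) + 2*C*(Real.log 3/3) := by
            refine add_le_add (norm_sum_le _ _) ?_
            have := abel_Ico_bound hC (g := fun n : ℕ => Real.log n / n) h.le
              hmono_log_div hnonneg_log_div
            simpa using this
        _ = K₁ := hK₁def.symm
  obtain ⟨K₂, hK₂0, hK₂⟩ := chebyshev_bound
  -- the key hyperbola identity
  have hid : ∀ x : ℕ, ∑ n ∈ range (x+1), (Real.log n / n) • χ (n : ZMod m)
      = ∑ d ∈ range (x+1), ((vonMangoldt d / d) • χ (d : ZMod m)) *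
          (∑ e ∈ range (x/d + 1), ((e:ℝ))⁻¹ • χ (e : ZMod m)) := by
    intro x
    have hR : ∀ d : ℕ, ∑ e ∈ range (x/d + 1), ((e:ℝ))⁻¹ • χ (e : ZMod m)
        = ∑ e ∈ Icc 1 (x/d), ((e:ℝ))⁻¹ • χ (e : ZMod m) := by
      intro d
      rw [Finset.range_eq_Ico, Finset.sum_eq_sum_Ico_succ_bot (Nat.succ_pos _)]
      rw [Nat.succ_eq_add_one, Finset.Ico_add_one_right_eq_Icc]
      simp
    calc ∑ n ∈ range (x+1), (Real.log n / n) • χ (n : ZMod m)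
        = ∑ n ∈ range (x+1), ∑ p ∈ n.divisorsAntidiagonal,
            (((vonMangoldt p.1 / p.1) • χ (p.1 : ZMod m)) *
              (((p.2:ℝ))⁻¹ • χ (p.2 : ZMod m))) := by
          refine Finset.sum_congr rfl fun n hn => ?_
          rcases Nat.eq_zero_or_pos n with rfl | hn0
          · simp
          · have key : ∀ p ∈ n.divisorsAntidiagonal,
                ((vonMangoldt p.1 / p.1) • χ (p.1 : ZMod m)) *
                  (((p.2:ℝ))⁻¹ • χ (p.2 : ZMod m))
                = (vonMangoldt p.1 / n) • χ (n : ZMod m) := by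
              rintro ⟨d, e⟩ hp
              rw [Nat.mem_divisorsAntidiagonal] at hp
              obtain ⟨hde, -⟩ := hp
              have hd : d ≠ 0 := by rintro rfl; rw [← hde] at hn0; simp at hn0
              have he : e ≠ 0 := by rintro rfl; rw [← hde] at hn0; simp at hn0
              have hχmul : χ (n : ZMod m) = χ (d : ZMod m) * χ (e : ZMod m) := by
                rw [← hde]; push_cast; rw [map_mul]
              simp only
              rw [Complex.real_smul, Complex.real_smul, Complex.real_smul, hχmul, ← hde]
              have hd' : (d:ℂ) ≠ 0 := Nat.cast_ne_zero.mpr hd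
              have he' : (e:ℂ) ≠ 0 := Nat.cast_ne_zero.mpr he
              push_cast
              field_simp
            rw [Finset.sum_congr rfl key]
            rw [← Finset.sum_smul]
            congr 1
            rw [← Finset.sum_div]
            rw [Nat.sum_divisorsAntidiagonal (fun d _ => vonMangoldt d)]
            rw [vonMangoldt_sum]
      _ = ∑ d ∈ range (x+1), ∑ e ∈ Icc 1 (x / d),
            (((vonMangoldt d / d) • χ (d : ZMod m)) * (((e:ℝ))⁻¹ • χ (e : ZMod m))) :=
          hyperbola _ x
      _ = _ := by
          refine Finset.sum_congr rfl fun d _ => ?_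
          rw [hR d, Finset.mul_sum]
  -- boundedness of `A x = Σ_{d ≤ x} χ(d) Λ(d) / d`
  set K₃ : ℝ := (K₁ + 2*C*K₂) / ‖Lc‖ with hK₃def
  have hK₃0 : 0 ≤ K₃ := by
    have : 0 < ‖Lc‖ := norm_pos_iff.mpr hLcne
    positivity
  have hA : ∀ x : ℕ, ‖∑ d ∈ range (x+1), (vonMangoldt d / d) • χ (d : ZMod m)‖ ≤ K₃ := by
    intro x
    rcases Nat.eq_zero_or_pos x with rfl | hx
    · simp only [zero_add, Finset.range_one, Finset.sum_singleton, Nat.cast_zero]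
      rw [show vonMangoldt 0 = 0 by simp]
      simp [hK₃0]
    · have e1 := hid x
      have e2 : ∑ d ∈ range (x+1), ((vonMangoldt d / d) • χ (d : ZMod m)) *
            (∑ e ∈ range (x/d + 1), ((e:ℝ))⁻¹ • χ (e : ZMod m))
          = (∑ d ∈ range (x+1), (vonMangoldt d / d) • χ (d : ZMod m)) * Lc
            + ∑ d ∈ range (x+1), ((vonMangoldt d / d) • χ (d : ZMod m)) *
                ((∑ e ∈ range (x/d + 1), ((e:ℝ))⁻¹ • χ (e : ZMod m)) - Lc) := by
        rw [Finset.sum_mul, ← Finset.sum_add_distrib]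
        exact Finset.sum_congr rfl fun d _ => by ring
      have e3 : (∑ d ∈ range (x+1), (vonMangoldt d / d) • χ (d : ZMod m)) * Lc
          = (∑ n ∈ range (x+1), (Real.log n / n) • χ (n : ZMod m))
            - ∑ d ∈ range (x+1), ((vonMangoldt d / d) • χ (d : ZMod m)) *
                ((∑ e ∈ range (x/d + 1), ((e:ℝ))⁻¹ • χ (e : ZMod m)) - Lc) := by
        rw [e1, e2]; ring
      have e4 : ‖∑ d ∈ range (x+1), ((vonMangoldt d / d) • χ (d : ZMod m)) *
            ((∑ e ∈ range (x/d + 1), ((e:ℝ))⁻¹ • χ (e : ZMod m)) - Lc)‖ ≤ 2*C*K₂ := by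
        calc ‖∑ d ∈ range (x+1), ((vonMangoldt d / d) • χ (d : ZMod m)) *
              ((∑ e ∈ range (x/d + 1), ((e:ℝ))⁻¹ • χ (e : ZMod m)) - Lc)‖
            ≤ ∑ d ∈ range (x+1), ‖((vonMangoldt d / d) • χ (d : ZMod m)) *
              ((∑ e ∈ range (x/d + 1), ((e:ℝ))⁻¹ • χ (e : ZMod m)) - Lc)‖ := norm_sum_le _ _
          _ ≤ ∑ d ∈ range (x+1), vonMangoldt d * (2*C/x) := by
              refine Finset.sum_le_sum fun d _ => ?_
              rw [norm_mul, norm_smul, Real.norm_eq_abs,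
                abs_of_nonneg (div_nonneg vonMangoldt_nonneg (Nat.cast_nonneg d))]
              rcases Nat.eq_zero_or_pos d with rfl | hd
              · rw [show vonMangoldt 0 = 0 by simp]
                simp
              · have h1 : ‖χ (d : ZMod m)‖ ≤ 1 := χ.norm_le_one _
                have h2 : ‖(∑ e ∈ range (x/d + 1), ((e:ℝ))⁻¹ • χ (e : ZMod m)) - Lc‖
                    ≤ 2*C*((↑(x/d) + 1 : ℝ))⁻¹ := by
                  rw [norm_sub_rev]
                  have := hLcB (x/d + 1) (Nat.le_add_left _ _)
                  have hcast : ((x/d + 1 : ℕ) : ℝ) = (↑(x/d) + 1 : ℝ) := by push_cast; ring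
                  rwa [hcast] at this
                have hxd : (x : ℝ) ≤ (d : ℝ) * ((↑(x/d) : ℝ) + 1) := by
                  have h3 : d * (x/d + 1) = d * (x/d) + d := by ring
                  have h4 := Nat.div_add_mod x d
                  have h5 := Nat.mod_lt x hd
                  have h6 : x ≤ d * (x/d + 1) := by omega
                  calc (x:ℝ) ≤ ((d * (x/d + 1) : ℕ) : ℝ) := by exact_mod_cast h6
                    _ = (d : ℝ) * ((↑(x/d) : ℝ) + 1) := by push_cast; ring
                have hkey : (2*C*((↑(x/d) + 1 : ℝ))⁻¹) / d ≤ 2*C/x := by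
                  have ht : (0:ℝ) < (↑(x/d) + 1 : ℝ) := by positivity
                  have hd0 : (0:ℝ) < d := by exact_mod_cast hd
                  have hx' : (0:ℝ) < x := by exact_mod_cast hx
                  have heq : (2*C*((↑(x/d) + 1 : ℝ))⁻¹) / d
                      = 2*C/((d:ℝ) * ((↑(x/d) + 1 : ℝ))) := by
                    field_simp
                  rw [heq]
                  exact div_le_div_of_nonneg_left (by positivity) hx' hxd
                calc vonMangoldt d / d * ‖χ (d : ZMod m)‖ *
                      ‖(∑ e ∈ range (x/d + 1), ((e:ℝ))⁻¹ • χ (e : ZMod m)) - Lc‖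
                    ≤ vonMangoldt d / d * 1 * (2*C*((↑(x/d) + 1 : ℝ))⁻¹) := by
                      have hv : 0 ≤ vonMangoldt d / (d:ℝ) :=
                        div_nonneg vonMangoldt_nonneg (Nat.cast_nonneg d)
                      gcongr
                  _ = vonMangoldt d * ((2*C*((↑(x/d) + 1 : ℝ))⁻¹) / d) := by ring
                  _ ≤ vonMangoldt d * (2*C/x) := by
                      have := vonMangoldt_nonneg (n := d)
                      gcongr
          _ ≤ 2*C*K₂ := by
              rw [← Finset.sum_mul]
              have hx' : (0:ℝ) < x := by exact_mod_cast hx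
              calc (∑ d ∈ range (x+1), vonMangoldt d) * (2*C/x)
                  ≤ (K₂ * x) * (2*C/x) := by
                    refine mul_le_mul_of_nonneg_right (hK₂ x hx) (by positivity)
                _ = 2*C*K₂ := by field_simp
      have e5 : ‖(∑ d ∈ range (x+1), (vonMangoldt d / d) • χ (d : ZMod m)) * Lc‖
          ≤ K₁ + 2*C*K₂ := by
        rw [e3]
        refine le_trans (norm_sub_le _ _) ?_
        exact add_le_add (hG _) e4
      have hLcpos : 0 < ‖Lc‖ := norm_pos_iff.mpr hLcne
      rw [hK₃def, le_div_iff₀ hLcpos]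
      rw [norm_mul] at e5
      exact e5
  -- boundedness of partial sums over primes `B N = Σ_{p < N} χ(p) log p / p`
  set b : ℕ → ℂ := fun n => if n.Prime then (Real.log n / n) • χ (n : ZMod m) else 0 with hbdef
  set T : ℝ := ∑' n : ℕ, (if n.Prime then 0 else vonMangoldt n) / n with hTdef
  have hT0 : 0 ≤ T := tsum_nonneg fun n => by
    have := vonMangoldt_nonneg (n := n); positivity
  have hB : ∀ N, ‖∑ n ∈ range N, b n‖ ≤ K₃ + T := by
    intro N
    rcases Nat.eq_zero_or_pos N with rfl | hN
    · simp only [Finset.range_zero, Finset.sum_empty, norm_zero]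
      linarith
    · obtain ⟨x, rfl⟩ : ∃ x, N = x + 1 := ⟨N - 1, by omega⟩
      have hsplit : ∀ n : ℕ, (vonMangoldt n / n) • χ (n : ZMod m)
          = b n + (if n.Prime then 0 else (vonMangoldt n / n) • χ (n : ZMod m)) := by
        intro n
        by_cases hn : n.Prime
        · simp only [hbdef, hn, if_true, vonMangoldt_apply_prime hn]
          ring
        · simp only [hbdef, hn, if_false]
          ring
      have hAx : ∑ d ∈ range (x+1), (vonMangoldt d / d) • χ (d : ZMod m)
          = (∑ n ∈ range (x+1), b n)
            + ∑ n ∈ range (x+1), (if n.Prime then 0 else (vonMangoldt n / n) • χ (n : ZMod m)) := by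
        rw [← Finset.sum_add_distrib]
        exact Finset.sum_congr rfl fun n _ => hsplit n
      have hrest : ‖∑ n ∈ range (x+1),
          (if n.Prime then 0 else (vonMangoldt n / n) • χ (n : ZMod m))‖ ≤ T := by
        calc ‖∑ n ∈ range (x+1), (if n.Prime then 0 else (vonMangoldt n / n) • χ (n : ZMod m))‖
            ≤ ∑ n ∈ range (x+1),
              ‖(if n.Prime then 0 else (vonMangoldt n / n) • χ (n : ZMod m))‖ := norm_sum_le _ _
          _ ≤ ∑ n ∈ range (x+1), (if n.Prime then 0 else vonMangoldt n) / n := by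
              refine Finset.sum_le_sum fun n _ => ?_
              by_cases hn : n.Prime
              · simp [hn]
              · simp only [hn, if_false]
                rw [norm_smul, Real.norm_eq_abs,
                  abs_of_nonneg (div_nonneg vonMangoldt_nonneg (Nat.cast_nonneg n))]
                calc vonMangoldt n / n * ‖χ (n : ZMod m)‖ ≤ vonMangoldt n / n * 1 := by
                      gcongr
                      · exact χ.norm_le_one _
                  _ = vonMangoldt n / n := mul_one _
          _ ≤ T := Summable.sum_le_tsum _ (fun n _ => by
                have := vonMangoldt_nonneg (n := n); positivity) summable_nonprime
      have : ∑ n ∈ range (x+1), b n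
          = (∑ d ∈ range (x+1), (vonMangoldt d / d) • χ (d : ZMod m))
            - ∑ n ∈ range (x+1), (if n.Prime then 0 else (vonMangoldt n / n) • χ (n : ZMod m)) := by
        rw [hAx]; ring
      rw [this]
      refine le_trans (norm_sub_le _ _) (add_le_add (hA x) hrest)
  -- Dirichlet's test: `Σ b n / log n` converges
  have hmono_invlog : ∀ i j : ℕ, 2 ≤ i → i ≤ j → (Real.log j)⁻¹ ≤ (Real.log i)⁻¹ := by
    intro i j hi hij
    have h1 : (1:ℝ) < i := by exact_mod_cast hi
    have h2 : 0 < Real.log i := Real.log_pos h1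
    have h3 : Real.log i ≤ Real.log j :=
      Real.log_le_log (by linarith) (by exact_mod_cast hij)
    exact inv_anti₀ h2 h3
  have h0_invlog : ∀ i : ℕ, 2 ≤ i → 0 ≤ (Real.log i)⁻¹ := by
    intro i hi
    have h1 : (1:ℝ) ≤ i := by exact_mod_cast le_trans one_le_two hi
    have := Real.log_nonneg h1
    positivity
  have htend_invlog : Tendsto (fun n : ℕ => (Real.log n)⁻¹) atTop (nhds 0) := by
    have h1 : Tendsto (fun n : ℕ => Real.log n) atTop atTop :=
      Real.tendsto_log_atTop.comp tendsto_natCast_atTop_atTop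
    exact h1.inv_tendsto_atTop
  obtain ⟨L, hLtend, -⟩ := abel_tendsto (N₀ := 2) hB hmono_invlog h0_invlog htend_invlog
  refine ⟨L, ?_⟩
  have heq : ∀ x : ℕ, ∑ p ∈ (range (x + 1)).filter Nat.Prime, χ (p : ZMod m) / (p : ℂ)
      = ∑ n ∈ range (x + 1), (Real.log n)⁻¹ • b n := by
    intro x
    rw [Finset.sum_filter]
    refine Finset.sum_congr rfl fun n _ => ?_
    by_cases hn : n.Prime
    · simp only [hn, if_true, hbdef]
      rw [smul_smul]
      have hlog : Real.log n ≠ 0 := by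
        have : (1:ℝ) < n := by exact_mod_cast hn.one_lt
        exact ne_of_gt (Real.log_pos this)
      have : (Real.log n)⁻¹ * (Real.log n / n) = ((n:ℝ))⁻¹ := by
        field_simp
      rw [this, Complex.real_smul]
      push_cast
      rw [div_eq_mul_inv, mul_comm]
    · simp [hn, hbdef]
  have : Tendsto (fun x : ℕ => ∑ n ∈ range (x + 1), (Real.log n)⁻¹ • b n) atTop (nhds L) :=
    hLtend.comp (tendsto_add_atTop_nat 1)
  exact Tendsto.congr (fun x => (heq x).symm) this
end

section
/- Let χ be a Dirichlet character mod m, let σ₀ ∈ (0, 1), and suppose there is C > 0 such that for all x ≥ 2, |Σ_{p ≤ x, p prime} χ(p) · log p| ≤ C · x^{σ₀} · (log(m·x))². Then for every real s > σ₀ the series Σ_p χ(p)/p^s converges: there exists L ∈ ℂ such that Σ_{p ≤ x, p prime} χ(p)/p^s tends to L as x → ∞. -/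
open Filter Finset Asymptotics in
private lemma logsq_isLittleO_aux (c δ : ℝ) (hc : 0 < c) (hδ : 0 < δ) :
    (fun x : ℝ => (Real.log (c * x)) ^ 2) =o[atTop] fun x : ℝ => x ^ δ := by
  have h1 : (fun x : ℝ => Real.log (c * x)) =o[atTop] fun x : ℝ => x ^ (δ/2) := by
    have hconst : (fun _ : ℝ => Real.log c) =o[atTop] fun x : ℝ => x ^ (δ/2) := by
      rw [Asymptotics.isLittleO_const_left]
      exact Or.inr (tendsto_abs_atTop_atTop.comp (tendsto_rpow_atTop (by positivity)))
    have hlog : Real.log =o[atTop] fun x : ℝ => x ^ (δ/2) :=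
      isLittleO_log_rpow_atTop (by positivity)
    refine (hconst.add hlog).congr' ?_ EventuallyEq.rfl
    filter_upwards [eventually_gt_atTop 0] with x hx
    rw [Real.log_mul hc.ne' hx.ne']
  refine (h1.mul h1).congr' (by filter_upwards with x; ring) ?_
  filter_upwards [eventually_gt_atTop 0] with x hx
  rw [← Real.rpow_add hx]
  norm_num

private lemma weight_diff_bound (s : ℝ) (hs : 0 < s) (i : ℕ) (hi : 3 ≤ i) :
    |((i : ℝ) + 1) ^ (-s) / Real.log ((i : ℝ) + 1) - (i : ℝ) ^ (-s) / Real.log i| ≤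
      (s + 1) * (i : ℝ) ^ (-s - 1) := by
  have hi3 : (3 : ℝ) ≤ (i : ℝ) := by exact_mod_cast hi
  set F : ℝ → ℝ := fun t => t ^ (-s) / Real.log t with hF
  set F' : ℝ → ℝ := fun t => ((-s) * t ^ (-s - 1) * Real.log t - t ^ (-s) * t⁻¹) /
      (Real.log t) ^ 2 with hF'
  have hderiv : ∀ t : ℝ, 3 ≤ t → HasDerivAt F (F' t) t := by
    intro t ht
    have ht0 : (0 : ℝ) < t := by linarith
    have hlog : (1 : ℝ) < Real.log t := by
      rw [Real.lt_log_iff_exp_lt ht0]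
      calc Real.exp 1 < 2.7182818286 := Real.exp_one_lt_d9
        _ ≤ t := by norm_num; linarith
    have h1 : HasDerivAt (fun t : ℝ => t ^ (-s)) ((-s) * t ^ (-s - 1)) t :=
      Real.hasDerivAt_rpow_const (Or.inl ht0.ne')
    have h2 : HasDerivAt Real.log t⁻¹ t := Real.hasDerivAt_log ht0.ne'
    exact h1.div h2 (by linarith)
  have hcont : ContinuousOn F (Set.Icc (i : ℝ) ((i : ℝ) + 1)) := by
    intro t ht
    exact ((hderiv t (le_trans hi3 ht.1)).differentiableAt).continuousAt.continuousWithinAt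
  obtain ⟨c, hc, hceq⟩ := exists_hasDerivAt_eq_slope F F' (by linarith : (i : ℝ) < (i : ℝ) + 1)
    hcont (fun t ht => hderiv t (le_trans hi3 ht.1.le))
  have hsub : F ((i : ℝ) + 1) - F (i : ℝ) = F' c := by
    rw [hceq]; ring
  have : |F ((i : ℝ) + 1) - F (i : ℝ)| ≤ (s + 1) * (i : ℝ) ^ (-s - 1) := by
    rw [hsub]
    have hc3 : (3 : ℝ) ≤ c := le_trans hi3 hc.1.le
    have hc0 : (0 : ℝ) < c := by linarith
    have hlog : (1 : ℝ) < Real.log c := by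
      rw [Real.lt_log_iff_exp_lt hc0]
      calc Real.exp 1 < 2.7182818286 := Real.exp_one_lt_d9
        _ ≤ c := by norm_num; linarith
    have hA : (0 : ℝ) ≤ c ^ (-s - 1) := (Real.rpow_pos_of_pos hc0 _).le
    have hrw : c ^ (-s) * c⁻¹ = c ^ (-s - 1) := by
      rw [Real.rpow_sub hc0, Real.rpow_one, div_eq_mul_inv]
    have h1 : |F' c| ≤ (s + 1) * c ^ (-s - 1) := by
      rw [hF']
      simp only
      rw [hrw, abs_div, abs_of_pos (by positivity : (0:ℝ) < (Real.log c) ^ 2)]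
      have hL0 : (0 : ℝ) ≤ Real.log c := by linarith
      have hL1 : (0 : ℝ) ≤ Real.log c - 1 := by linarith
      have : |(-s) * c ^ (-s - 1) * Real.log c - c ^ (-s - 1)| =
          s * c ^ (-s - 1) * Real.log c + c ^ (-s - 1) := by
        rw [abs_of_nonpos (by nlinarith [mul_nonneg (mul_nonneg hs.le hA) hL0])]
        ring
      rw [this, div_le_iff₀ (by positivity)]
      nlinarith [mul_nonneg (mul_nonneg hs.le hA) (mul_nonneg hL0 hL1),
        mul_nonneg hA (mul_nonneg hL1 (by linarith : (0:ℝ) ≤ Real.log c + 1))]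
    have h2 : c ^ (-s - 1) ≤ (i : ℝ) ^ (-s - 1) :=
      Real.rpow_le_rpow_of_nonpos (by linarith) hc.1.le (by linarith)
    calc |F' c| ≤ (s + 1) * c ^ (-s - 1) := h1
      _ ≤ (s + 1) * (i : ℝ) ^ (-s - 1) := by nlinarith
  simpa [hF] using this

private lemma cast_div_helper (z : ℂ) (P L : ℝ) (hP : P ≠ 0) (hL : L ≠ 0) :
    z / (P : ℂ) = ((P⁻¹ / L : ℝ) : ℂ) * (z * ((L : ℝ) : ℂ)) := by
  have hP' : (P : ℂ) ≠ 0 := Complex.ofReal_ne_zero.mpr hP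
  have hL' : (L : ℂ) ≠ 0 := Complex.ofReal_ne_zero.mpr hL
  push_cast
  field_simp

open Filter Finset in
/-- From a bound `|ϑ(x, χ)| ≤ C · x^σ₀ · (log(m·x))²` on
`ϑ(x, χ) = Σ_{p ≤ x, p prime} χ(p) log p`, with `σ₀ ∈ (0, 1)`, partial summation gives the
convergence of `Σ_{p prime} χ(p)/p^s` for every real `s > σ₀`. -/
theorem prime_sum_converges_of_theta_bound (m : ℕ) [NeZero m] (χ : DirichletCharacter ℂ m)
    (σ₀ : ℝ) (hσ₀ : 0 < σ₀ ∧ σ₀ < 1)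
    (hϑ : ∃ C : ℝ, 0 < C ∧ ∀ x : ℝ, 2 ≤ x →
      ‖∑ p ∈ (range (⌊x⌋₊ + 1)).filter Nat.Prime, χ (p : ZMod m) * (Real.log p : ℂ)‖ ≤
        C * x ^ σ₀ * (Real.log (m * x)) ^ 2)
    (s : ℝ) (hs : σ₀ < s) :
    ∃ L : ℂ, Tendsto
      (fun x : ℕ => ∑ p ∈ (range (x + 1)).filter Nat.Prime,
        χ (p : ZMod m) / ((p : ℂ) ^ (s : ℂ)))
      atTop (nhds L) := by
  obtain ⟨C, hC, hbd⟩ := hϑ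
  obtain ⟨hσ₀0, hσ₀1⟩ := hσ₀
  have hs0 : 0 < s := lt_trans hσ₀0 hs
  have hm : (0 : ℝ) < m := by exact_mod_cast Nat.pos_of_ne_zero (NeZero.ne m)
  set a : ℕ → ℂ := fun n => if n.Prime then χ (n : ZMod m) * (Real.log n : ℂ) else 0 with ha
  set Θ : ℕ → ℂ := fun N => ∑ i ∈ range N, a i with hΘdef
  set w : ℕ → ℝ := fun n => (n : ℝ) ^ (-s) / Real.log n with hw
  -- bound on Θ
  have hΘ : ∀ N : ℕ, 2 ≤ N → ‖Θ (N + 1)‖ ≤ C * (N : ℝ) ^ σ₀ * (Real.log (m * N)) ^ 2 := by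
    intro N hN
    have h2 : (2 : ℝ) ≤ (N : ℝ) := by exact_mod_cast hN
    have := hbd (N : ℝ) h2
    rw [Nat.floor_natCast] at this
    convert this using 2
    rw [hΘdef, ha]
    simp only
    rw [sum_filter]
  -- the summands equality
  have hsummand : ∀ x : ℕ, ∑ p ∈ (range (x + 1)).filter Nat.Prime,
      χ (p : ZMod m) / ((p : ℂ) ^ (s : ℂ)) = ∑ i ∈ range (x + 1), (w i : ℂ) • a i := by
    intro x
    rw [sum_filter]
    refine sum_congr rfl fun i _ => ?_
    by_cases hp : i.Prime
    · simp only [hp, if_true, ha, smul_eq_mul]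
      have hi2 : 2 ≤ i := hp.two_le
      have hi1 : (1 : ℝ) < (i : ℝ) := by exact_mod_cast hp.one_lt
      have hi0 : (0 : ℝ) < (i : ℝ) := by linarith
      have hlog : 0 < Real.log i := Real.log_pos hi1
      rw [hw]
      simp only
      rw [← Complex.ofReal_natCast i, ← Complex.ofReal_cpow hi0.le]
      rw [Real.rpow_neg hi0.le]
      exact cast_div_helper _ _ _ (Real.rpow_pos_of_pos hi0 s).ne' hlog.ne'
    · simp [hp, ha]
  -- the difference terms
  set d : ℕ → ℂ := fun i => ((w (i + 1) : ℂ) - (w i : ℂ)) • Θ (i + 1) with hd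
  -- Abel summation
  have hparts : ∀ x : ℕ, ∑ i ∈ range (x + 1), (w i : ℂ) • a i
      = (w x : ℂ) • Θ (x + 1) - ∑ i ∈ range x, d i := by
    intro x
    have := Finset.sum_range_by_parts (fun n => ((w n : ℝ) : ℂ)) a (x + 1)
    simpa [hd, hΘdef] using this
  set δ : ℝ := (s - σ₀) / 2 with hδdef
  have hδ : 0 < δ := by rw [hδdef]; linarith
  -- first term tends to zero
  have hlittle := logsq_isLittleO_aux m (s - σ₀) hm (by linarith)
  have hg : Tendsto (fun x : ℝ => C * ((Real.log (m * x)) ^ 2 / x ^ (s - σ₀)))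
      atTop (nhds 0) := by
    simpa using (hlittle.tendsto_div_nhds_zero).const_mul C
  have hterm1 : Tendsto (fun x : ℕ => (w x : ℂ) • Θ (x + 1)) atTop (nhds 0) := by
    apply squeeze_zero_norm' ?_ (hg.comp tendsto_natCast_atTop_atTop)
    filter_upwards [eventually_ge_atTop 3] with x hx3
    have hx3' : (3 : ℝ) ≤ (x : ℝ) := by exact_mod_cast hx3
    have hx0 : (0 : ℝ) < (x : ℝ) := by linarith
    have hlogx : (1 : ℝ) ≤ Real.log x := by
      rw [Real.le_log_iff_exp_le hx0]
      refine le_of_lt ?_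
      calc Real.exp 1 < 2.7182818286 := Real.exp_one_lt_d9
        _ ≤ (x : ℝ) := by norm_num; linarith
    have hwx : |w x| ≤ (x : ℝ) ^ (-s) := by
      rw [hw]
      simp only
      rw [abs_of_nonneg (by positivity)]
      exact div_le_self (by positivity) hlogx
    have hnorm : ‖(w x : ℂ) • Θ (x + 1)‖ ≤ (x : ℝ) ^ (-s) * (C * (x : ℝ) ^ σ₀ *
        (Real.log (m * x)) ^ 2) := by
      rw [norm_smul, Complex.norm_real]
      exact mul_le_mul hwx (hΘ x (by omega)) (norm_nonneg _)
        (Real.rpow_nonneg hx0.le _)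
    refine hnorm.trans (le_of_eq ?_)
    have hxx : (x : ℝ) ^ (-s) * (x : ℝ) ^ σ₀ = ((x : ℝ) ^ (s - σ₀))⁻¹ := by
      rw [← Real.rpow_add hx0, ← Real.rpow_neg hx0.le]
      ring_nf
    simp only [Function.comp]
    rw [div_eq_mul_inv, ← hxx]
    ring
  -- summability of the difference terms
  have hlog2 := (logsq_isLittleO_aux m δ hm hδ).bound one_pos
  have hd_ev : ∀ᶠ i : ℕ in atTop, ‖d i‖ ≤ ((s + 1) * C) * (i : ℝ) ^ (-1 - δ) := by
    filter_upwards [eventually_ge_atTop 3,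
      tendsto_natCast_atTop_atTop.eventually hlog2] with i hi3 hlogbd
    have hi3' : (3 : ℝ) ≤ (i : ℝ) := by exact_mod_cast hi3
    have hi0 : (0 : ℝ) < (i : ℝ) := by linarith
    -- |w(i+1) - w i| ≤ (s+1) i^{-s-1}
    have hwd : |w (i + 1) - w i| ≤ (s + 1) * (i : ℝ) ^ (-s - 1) := by
      have := weight_diff_bound s hs0 i hi3
      rw [hw]
      simp only
      push_cast
      exact this
    -- ‖Θ(i+1)‖ bound
    have hlogsq : (Real.log (m * (i : ℝ))) ^ 2 ≤ (i : ℝ) ^ δ := by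
      have h := hlogbd
      rwa [Real.norm_eq_abs, Real.norm_eq_abs, abs_of_nonneg (sq_nonneg _),
        abs_of_nonneg (Real.rpow_nonneg hi0.le _), one_mul] at h
    have hΘb2 : ‖Θ (i + 1)‖ ≤ C * (i : ℝ) ^ σ₀ * (i : ℝ) ^ δ := by
      refine (hΘ i (by omega)).trans ?_
      have h0 : (0 : ℝ) ≤ C * (i : ℝ) ^ σ₀ := by positivity
      exact mul_le_mul_of_nonneg_left hlogsq h0
    calc ‖d i‖ = |w (i + 1) - w i| * ‖Θ (i + 1)‖ := by
          rw [hd]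
          simp only [norm_smul]
          rw [← Complex.ofReal_sub, Complex.norm_real]
          rfl
      _ ≤ ((s + 1) * (i : ℝ) ^ (-s - 1)) * (C * (i : ℝ) ^ σ₀ * (i : ℝ) ^ δ) := by
          apply mul_le_mul hwd hΘb2 (norm_nonneg _)
          positivity
      _ = ((s + 1) * C) * ((i : ℝ) ^ (-s - 1) * (i : ℝ) ^ σ₀ * (i : ℝ) ^ δ) := by ring
      _ = ((s + 1) * C) * (i : ℝ) ^ (-1 - δ) := by
          rw [← Real.rpow_add hi0, ← Real.rpow_add hi0]
          congr 1
          rw [hδdef]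
          ring
  have hsum0 : Summable (fun n : ℕ => (n : ℝ) ^ (-1 - δ)) :=
    Real.summable_nat_rpow.mpr (by linarith)
  have hd_sum : Summable d := by
    refine Summable.of_norm_bounded_eventually (hsum0.mul_left ((s + 1) * C)) ?_
    rwa [Nat.cofinite_eq_atTop]
  refine ⟨-∑' i, d i, ?_⟩
  have heq : (fun x : ℕ => ∑ p ∈ (range (x + 1)).filter Nat.Prime,
      χ (p : ZMod m) / ((p : ℂ) ^ (s : ℂ))) =
      fun x : ℕ => (w x : ℂ) • Θ (x + 1) - ∑ i ∈ range x, d i :=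
    funext fun x => (hsummand x).trans (hparts x)
  rw [heq]
  simpa using hterm1.sub hd_sum.hasSum.tendsto_sum_nat
end
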